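/- arXiv:math/0412152 — 2 statements merged into one kernel-verified Lean document; each statement's English description precedes it below -/
import Mathlib

section
/- Fix N ≥ 1, integers c_{j,i} for 1 ≤ j < i ≤ N, ε ∈ {0,1}^N, and let λ₁, …, λ_N be the standard basis of the free ℤ-module ℤ^N (or of ℚ^N). Define c_{k,l}(ε) by the recursion c_{k,k+1}(ε) = -c_{k,k+1} and c_{k,l}(ε) = -c_{k,l} − ∑_{k<m<l, ε_m=1} c_{m,l} c_{k,m}(ε), and define λ_j(ε) = (-1)^{ε_j + 1}·(λ_j + ∑_{k < j, ε_k = 1} c_{k,j}(ε) λ_k). Then for every 1 ≤ i ≤ N: ∑_{j < i, ε_j = 1} (−c_{j,i}(ε))·λ_j = ∑_{j < i, ε_j = 1} c_{j,i}·λ_j(ε). -/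
/-- The twisted structure constants `c_{k,l}(ε)`, defined by the recursion
`c_{k,l}(ε) = -c_{k,l} - ∑_{k<m<l, ε_m=1} c_{m,l} c_{k,m}(ε)`
(which in particular gives `c_{k,k+1}(ε) = -c_{k,k+1}`, the sum being empty). -/
def cEps (c : ℕ → ℕ → ℤ) (ε : ℕ → Bool) (k : ℕ) : ℕ → ℤ
  | l =>
    -c k l - ∑ m ∈ ((Finset.Ioo k l).filter fun m => ε m = true).attach,
      c m.1 l * cEps c ε k m.1
termination_by l => l
decreasing_by
  have hm := m.2
  simp only [Finset.mem_filter, Finset.mem_Ioo] at hm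
  exact hm.1.2

/-- The weight `λ_j(ε) = (-1)^{ε_j+1} (λ_j + ∑_{k<j, ε_k=1} c_{k,j}(ε) λ_k)`
in the free ℤ-module `ℕ → ℤ`, where `λ_j` is the `j`-th standard basis vector. -/
def lambdaEps (c : ℕ → ℕ → ℤ) (ε : ℕ → Bool) (j : ℕ) : ℕ → ℤ :=
  (if ε j then (1 : ℤ) else -1) •
    ((Pi.single j 1 : ℕ → ℤ) +
      ∑ k ∈ (Finset.range j).filter (fun k => ε k = true),
        cEps c ε k j • (Pi.single k 1 : ℕ → ℤ))

theorem sum_neg_cEps_single_eq_sum_c_lambdaEps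
    (N : ℕ) (hN : 1 ≤ N) (c : ℕ → ℕ → ℤ) (ε : ℕ → Bool) :
    ∀ i : ℕ, 1 ≤ i → i ≤ N →
      ∑ j ∈ (Finset.range i).filter (fun j => ε j = true),
          (-cEps c ε j i) • (Pi.single j 1 : ℕ → ℤ)
        = ∑ j ∈ (Finset.range i).filter (fun j => ε j = true),
            c j i • lambdaEps c ε j := by
  intro i _ _
  have hL : ∀ j ∈ (Finset.range i).filter (fun j => ε j = true),
      (-cEps c ε j i) • (Pi.single j 1 : ℕ → ℤ)
      = c j i • (Pi.single j 1 : ℕ → ℤ) +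
        ∑ m ∈ ((Finset.Ioo j i).filter fun m => ε m = true),
          (c m i * cEps c ε j m) • (Pi.single j 1 : ℕ → ℤ) := by
    intro j _
    rw [cEps, Finset.sum_attach _ (fun m => c m i * cEps c ε j m)]
    rw [neg_sub, sub_eq_add_neg, neg_neg, add_comm, add_smul, Finset.sum_smul]
  have hR : ∀ j ∈ (Finset.range i).filter (fun j => ε j = true),
      c j i • lambdaEps c ε j
      = c j i • (Pi.single j 1 : ℕ → ℤ) +
        ∑ k ∈ (Finset.range j).filter (fun k => ε k = true),
          (c j i * cEps c ε k j) • (Pi.single k 1 : ℕ → ℤ) := by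
    intro j hj
    simp only [Finset.mem_filter] at hj
    rw [lambdaEps, if_pos hj.2, one_smul, smul_add, Finset.smul_sum]
    simp only [smul_smul]
  rw [Finset.sum_congr rfl hL, Finset.sum_congr rfl hR,
    Finset.sum_add_distrib, Finset.sum_add_distrib]
  congr 1
  exact Finset.sum_comm' (fun j m => by
    simp only [Finset.mem_filter, Finset.mem_Ioo, Finset.mem_range]
    constructor
    · rintro ⟨⟨_, hj⟩, ⟨hm1, hm2⟩, hm⟩
      exact ⟨⟨hm1, hj⟩, hm2, hm⟩
    · rintro ⟨⟨hjm, hj⟩, hmi, hm⟩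
      exact ⟨⟨hjm.trans hmi, hj⟩, ⟨hjm, hmi⟩, hm⟩)
end

section
/- Work over ℤ in the ring 𝒰 = ℤ[X₁^{±1},…,X₅^{±1}, Z₁,…,Z₅]. In type G₂ with simple roots α₁, α₂ satisfying α₂(α₁^∨) = −3 and α₁(α₂^∨) = −1, take M = (α₂, α₁, α₂, α₁, α₂), so that m₁ = 1, m₂ = X₁³, m₃ = X₁^{-2}X₂, m₄ = X₁³X₂^{-2}X₃³, m₅ = X₁^{-2}X₂X₃^{-2}X₄. With the recursive ℤ-linear operator r_M defined as below, r_M(X₁²X₂²X₃²X₄²X₅²) = −13. -/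
/-- The ring `𝒰 = ℤ[X₁^{±1},…,X₅^{±1}, Z₁,…,Z₅]`, realized as the monoid algebra of
`(Fin 5 → ℤ) × (Fin 5 → ℕ)` (X-exponents integral, Z-exponents natural) over `ℤ`. -/
abbrev URing : Type := AddMonoidAlgebra ℤ ((Fin 5 → ℤ) × (Fin 5 → ℕ))

/-- The monomial `∏ X_j^{a j} ∏ Z_j^{b j}` in `𝒰`. -/
noncomputable def umon (a : Fin 5 → ℤ) (b : Fin 5 → ℕ) : URing :=
  AddMonoidAlgebra.single (a, b) 1

/-- The exponent vectors of the monomials `m₁ = 1`, `m₂ = X₁³`, `m₃ = X₁⁻²X₂`,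
`m₄ = X₁³X₂⁻²X₃³`, `m₅ = X₁⁻²X₂X₃⁻²X₄` (type `G₂`, `M = (α₂,α₁,α₂,α₁,α₂)`). -/
def mExp : Fin 5 → (Fin 5 → ℤ) :=
  ![0, ![3, 0, 0, 0, 0], ![-2, 1, 0, 0, 0], ![3, -2, 3, 0, 0], ![-2, 1, -2, 1, 0]]

/-- The `r`-th power `m_i^r` (`r : ℤ`), a Laurent monomial in the `X` variables. -/
noncomputable def mPow (i : Fin 5) (r : ℤ) : URing := umon (r • mExp i) 0

/-- One step of the recursion defining `r_M^ε`: given the operator `f = r_M^{ε - (i)}`,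
the largest active index `i`, and a monomial with exponents `m` (coefficient handled
by linearity), apply the case analysis on `r = ` X-exponent and `s = ` Z-exponent at `i`. -/
noncomputable def rStep (f : URing → ℤ) (i : Fin 5)
    (m : (Fin 5 → ℤ) × (Fin 5 → ℕ)) : ℤ :=
  let r : ℤ := m.1 i
  let s : ℕ := m.2 i
  let S : URing := umon (Function.update m.1 i 0) (Function.update m.2 i 0)
  if 0 < s then f (S * (1 - mPow i 1) ^ (s - 1) * mPow i r)
  else if r = 0 then f S
  else if r = 1 then 0
  else if 1 < r then -f (S * ∑ k ∈ Finset.Icc 1 (r.toNat - 1), mPow i (k : ℤ))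
  else f (S * ∑ k ∈ Finset.range ((-r).toNat + 1), mPow i (-(k : ℤ)))

/-- The recursive `ℤ`-linear operators `r_M^ε : 𝒰 → ℤ`, where `ε` is recorded by its
set of active indices. For `ε = ∅` it evaluates `X_i = 1`, `Z_i = 0`; otherwise it
processes the largest active index `i` and recurses on `ε \ {i}`. -/
noncomputable def rOp : Finset (Fin 5) → URing → ℤ := fun ε =>
  if h : ε.Nonempty then
    fun P => Finsupp.sum P.coeff fun m coef =>
      coef * rStep (rOp (ε.erase (ε.max' h))) (ε.max' h) m
  else
    fun P => Finsupp.sum P.coeff fun m coef => if m.2 = 0 then coef else 0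
termination_by ε => ε.card
decreasing_by exact Finset.card_erase_lt_of_mem (Finset.max'_mem _ h)

/-!
The recursion never creates a `Z`-variable when it starts from a `Z`-free monomial
(the case `s > 0` is never entered), so on `Z`-free monomials `r_M^ε` is an integer-valued
recursion `rFree` on exponent vectors. Its value at `(2,2,2,2,2)` is a finite computation,
carried out by the kernel.
-/

def rFreeStep (g : (Fin 5 → ℤ) → ℤ) (i : Fin 5) (v : Fin 5 → ℤ) : ℤ :=
  let r := v i
  let w := Function.update v i 0
  if r = 0 then g w
  else if r = 1 then 0
  else if 1 < r then -∑ k ∈ Finset.Icc 1 (r.toNat - 1), g (w + (k : ℤ) • mExp i)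
  else ∑ k ∈ Finset.range ((-r).toNat + 1), g (w + (-(k : ℤ)) • mExp i)

def rFree : List (Fin 5) → (Fin 5 → ℤ) → ℤ
  | [], _ => 1
  | i :: l, v => rFreeStep (rFree l) i v

lemma rOp_add (ε : Finset (Fin 5)) (P Q : URing) :
    rOp ε (P + Q) = rOp ε P + rOp ε Q := by
  rw [rOp]
  split_ifs
  · exact Finsupp.sum_add_index' (fun _ => zero_mul _) (fun _ _ _ => add_mul _ _ _)
  · refine Finsupp.sum_add_index' (fun _ => ?_) (fun _ _ _ => ?_) <;> split_ifs <;> simp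

noncomputable def rOpHom (ε : Finset (Fin 5)) : URing →+ ℤ :=
  AddMonoidHom.mk' (rOp ε) (rOp_add ε)

lemma coe_rOpHom (ε : Finset (Fin 5)) : ⇑(rOpHom ε) = rOp ε := rfl

lemma rOp_empty_umon (v : Fin 5 → ℤ) : rOp ∅ (umon v 0) = 1 := by
  rw [rOp, dif_neg Finset.not_nonempty_empty, umon, AddMonoidAlgebra.coeff_single,
    Finsupp.sum_single_index (by simp), if_pos rfl]

lemma rOp_insert_single {i : Fin 5} {ε : Finset (Fin 5)} (hi : ∀ j ∈ ε, j < i)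
    (m : (Fin 5 → ℤ) × (Fin 5 → ℕ)) (c : ℤ) :
    rOp (insert i ε) (AddMonoidAlgebra.single m c) = c * rStep (rOp ε) i m := by
  have hne : (insert i ε).Nonempty := Finset.insert_nonempty i ε
  have hmax : (insert i ε).max' hne = i :=
    le_antisymm (Finset.max'_le _ _ _ fun j hj => by
        rcases Finset.mem_insert.1 hj with rfl | hj
        exacts [le_rfl, (hi j hj).le])
      (Finset.le_max' _ _ (Finset.mem_insert_self i ε))
  have herase : (insert i ε).erase i = ε :=
    Finset.erase_insert fun h => lt_irrefl i (hi i h)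
  rw [rOp, dif_pos hne, hmax, herase, AddMonoidAlgebra.coeff_single]
  exact Finsupp.sum_single_index (zero_mul _)

lemma umon_mul_mPow (a : Fin 5 → ℤ) (i : Fin 5) (k : ℤ) :
    umon a 0 * mPow i k = umon (a + k • mExp i) 0 := by
  rw [mPow, umon, umon, umon, AddMonoidAlgebra.single_mul_single, mul_one, Prod.mk_add_mk,
    add_zero]

lemma rStep_zFree (f : URing →+ ℤ) (i : Fin 5) (v : Fin 5 → ℤ) :
    rStep f i (v, 0) = rFreeStep (fun w => f (umon w 0)) i v := by
  have hS : Function.update (0 : Fin 5 → ℕ) i 0 = 0 := Function.update_eq_self i 0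
  simp only [rStep, rFreeStep, hS, Pi.zero_apply, lt_irrefl, if_false, Finset.mul_sum,
    umon_mul_mPow, map_sum]

theorem rOp_umon_eq_rFree (l : List (Fin 5)) (hl : l.Pairwise (· > ·)) (v : Fin 5 → ℤ) :
    rOp l.toFinset (umon v 0) = rFree l v := by
  induction l generalizing v with
  | nil => exact rOp_empty_umon v
  | cons i t ih =>
    rw [List.pairwise_cons] at hl
    rw [List.toFinset_cons, umon, rOp_insert_single (fun j hj => hl.1 j (List.mem_toFinset.1 hj)),
      one_mul, rFree, ← coe_rOpHom, rStep_zFree]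
    congr 1
    funext w
    exact ih hl.2 w

theorem rOp_G2_value :
    rOp Finset.univ (umon (fun _ => 2) 0) = -13 := by
  have huniv : (Finset.univ : Finset (Fin 5)) = [4, 3, 2, 1, 0].toFinset := by decide
  rw [huniv, rOp_umon_eq_rFree _ (by decide)]
  decide
end
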